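/- arXiv:1612.05514 — 3 statements merged into one kernel-verified Lean document; each statement's English description precedes it below -/
import Mathlib

section
/- Let M be a Maya diagram with 0 ∈ M and let M' = M − 1. Let (s₁,…,s_p | t₁,…,t_q) be the Frobenius symbol of M (so that t_q = 0). Then the Hermite pseudo-Wronskians satisfy H_M = (−1)^p · 2^{q−1} · (∏_{b=1}^{q−1} t_b) · H_{M'} as functions on ℝ. -/
/-- A Maya diagram: a set of integers containing only finitely many non-negative
integers and excluding only finitely many negative integers. -/
def IsMaya (M : Set ℤ) : Prop :=
  {m : ℤ | m ∈ M ∧ 0 ≤ m}.Finite ∧ {m : ℤ | m < 0 ∧ m ∉ M}.Finite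

/-- The shifted Maya diagram `M - k = {m - k : m ∈ M}`. -/
def shiftM (M : Set ℤ) (k : ℤ) : Set ℤ := {m : ℤ | m + k ∈ M}

/-- `M₊`, viewed as a subset of ℕ. -/
def MayaPlus (M : Set ℤ) : Set ℕ := {a : ℕ | (a : ℤ) ∈ M}

/-- `M₋ = {-m-1 : m < 0, m ∉ M}`, viewed as a subset of ℕ. -/
def MayaMinus (M : Set ℤ) : Set ℕ := {a : ℕ | (-(a : ℤ) - 1) ∉ M}

/-- The girth `|M| = #M₋ + #M₊`. -/
noncomputable def girth (M : Set ℤ) : ℕ := (MayaMinus M).ncard + (MayaPlus M).ncard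

/-- Physicists' Hermite polynomial `H_n(x) = (-1)^n e^{x²} Dⁿ e^{-x²}`, as a real function. -/
noncomputable def physHermite (n : ℕ) : ℝ → ℝ :=
  fun x => (-1 : ℝ) ^ n * Real.exp (x ^ 2) * iteratedDeriv n (fun y => Real.exp (-y ^ 2)) x

/-- The complex Hermite function `(-1)^n e^{z²} Dⁿ e^{-z²}`. -/
noncomputable def hermiteC (n : ℕ) : ℂ → ℂ :=
  fun z => (-1 : ℂ) ^ n * Complex.exp (z ^ 2) * iteratedDeriv n (fun w => Complex.exp (-w ^ 2)) z

/-- Conjugate Hermite polynomial `θ_n(x) = i^{-n} H_n(i x)`, as a real function. -/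
noncomputable def conjHermite (n : ℕ) : ℝ → ℝ :=
  fun x => (Complex.I ^ (-(n : ℤ)) * hermiteC n (Complex.I * x)).re

/-- The Hermite pseudo-Wronskian of a Maya diagram with Frobenius symbol
`(s₁,…,s_p | t₁,…,t_q)`:
`H_M(x) = e^{-p x²} · Wr[e^{x²}θ_{s₁}, …, e^{x²}θ_{s_p}, H_{t_q}, …, H_{t₁}](x)`.
Here `s i` is `s_{i+1}` and `t j` is `t_{j+1}` (0-based indexing). -/
noncomputable def pW (p q : ℕ) (s : Fin p → ℕ) (t : Fin q → ℕ) (x : ℝ) : ℝ :=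
  Real.exp (-(p : ℝ) * x ^ 2) *
    Matrix.det (Matrix.of fun i k : Fin (p + q) =>
      iteratedDeriv (k : ℕ)
        (fun y => if h : (i : ℕ) < p then Real.exp (y ^ 2) * conjHermite (s ⟨i, h⟩) y
          else physHermite (t ⟨p + q - 1 - (i : ℕ), by have := i.isLt; omega⟩) y) x)

/-- `(s₁,…,s_p | t₁,…,t_q)` is the Frobenius symbol of `M`. -/
def IsFrobenius {p q : ℕ} (M : Set ℤ) (s : Fin p → ℕ) (t : Fin q → ℕ) : Prop :=
  StrictAnti s ∧ StrictAnti t ∧ Set.range s = MayaMinus M ∧ Set.range t = MayaPlus M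

/-- `i_n = #{m ∉ M : m < n}`. -/
noncomputable def iN (M : Set ℤ) (n : ℤ) : ℕ := {m : ℤ | m ∉ M ∧ m < n}.ncard

/-- `j_n = #{m ∈ M : m ≥ n}`. -/
noncomputable def jN (M : Set ℤ) (n : ℤ) : ℕ := {m : ℤ | m ∈ M ∧ n ≤ m}.ncard

/-- `M` is in standard form. -/
def IsStandard (M : Set ℤ) : Prop := 0 ∉ M ∧ ∀ m : ℤ, m < 0 → m ∈ M

/-!
Since `0 ∈ M`, the smallest entry of `M₊` is `t_q = 0`, so the row of the Wronskian matrix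
belonging to `H_{t_q} = 1` (row `p`) is `(1, 0, …, 0)`. Expanding along it leaves `(-1)^p` times
the Wronskian of the derivatives of the remaining functions, and
`(e^{x²} θ_n)' = e^{x²} θ_{n+1}`, `H_n' = 2n H_{n-1}`. After pulling the factors `2 t_b` out of
the rows, what remains is the pseudo-Wronskian of the Frobenius symbol
`(s₁+1, …, s_p+1 | t₁-1, …, t_{q-1}-1)`, which is that of `M - 1`.
To compute these derivatives, `H_n` and `θ_n` are identified with integer polynomials
satisfying `H_{n+1} = 2X H_n - H_n'` and `θ_{n+1} = 2X θ_n + θ_n'`.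
-/

section Wronskian

variable {𝕜 : Type*} [NontriviallyNormedField 𝕜]

noncomputable def wronskian {n : ℕ} (f : Fin n → 𝕜 → 𝕜) (x : 𝕜) : 𝕜 :=
  (Matrix.of fun i k : Fin n => iteratedDeriv k (f i) x).det

theorem wronskian_eq_of_apply_eq_one {N : ℕ} (f : Fin (N + 1) → 𝕜 → 𝕜) (g : Fin N → 𝕜 → 𝕜)
    (c : Fin N → 𝕜) (P : Fin (N + 1)) (hP : f P = 1)
    (hderiv : ∀ i, deriv (f (P.succAbove i)) = c i • g i) (x : 𝕜) :
    wronskian f x = (-1) ^ (P : ℕ) * (∏ i, c i) * wronskian g x := by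
  have hrow : ∀ k : Fin (N + 1), iteratedDeriv k (f P) x = if k = 0 then 1 else 0 := by
    intro k
    simp [hP, Pi.one_def, iteratedDeriv_const, ← Fin.val_eq_zero_iff]
  have hminor : ((Matrix.of fun i k : Fin (N + 1) => iteratedDeriv k (f i) x).submatrix
      P.succAbove (0 : Fin (N + 1)).succAbove).det = (∏ i, c i) * wronskian g x := by
    rw [wronskian, ← Matrix.det_mul_column]
    congr 1
    ext i k
    simp [iteratedDeriv_succ', hderiv]
  rw [wronskian, Matrix.det_succ_row _ P, Fintype.sum_eq_single 0, hminor]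
  · simp only [Matrix.of_apply, Fin.val_zero, iteratedDeriv_zero, hP, Pi.one_apply, add_zero]
    ring
  · intro k hk
    simp [hrow, hk]

end Wronskian

section Hermite

open Polynomial

noncomputable def physHermitePoly : ℕ → ℤ[X]
  | 0 => 1
  | n + 1 => 2 * X * physHermitePoly n - derivative (physHermitePoly n)

noncomputable def conjHermitePoly : ℕ → ℤ[X]
  | 0 => 1
  | n + 1 => 2 * X * conjHermitePoly n + derivative (conjHermitePoly n)

theorem derivative_physHermitePoly_succ (n : ℕ) :
    derivative (physHermitePoly (n + 1)) = 2 * (n + 1 : ℤ[X]) * physHermitePoly n := by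
  induction n with
  | zero => simp [physHermitePoly]
  | succ n ih =>
    rw [physHermitePoly, derivative_sub, derivative_mul, ih, derivative_mul, physHermitePoly]
    simp only [derivative_mul, derivative_ofNat, derivative_X, derivative_add,
      derivative_natCast, derivative_one]
    push_cast
    ring

theorem derivative_physHermitePoly (n : ℕ) :
    derivative (physHermitePoly n) = 2 * (n : ℤ[X]) * physHermitePoly (n - 1) := by
  cases n with
  | zero => simp [physHermitePoly]
  | succ n => simpa using derivative_physHermitePoly_succ n

open Complex in
theorem map_physHermitePoly_comp_I_mul (n : ℕ) :
    ((physHermitePoly n).map (Int.castRingHom ℂ)).comp (C I * X) =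
      C (I ^ n) * (conjHermitePoly n).map (Int.castRingHom ℂ) := by
  induction n with
  | zero => simp [physHermitePoly, conjHermitePoly]
  | succ n ih =>
    have hder : ((derivative (physHermitePoly n)).map (Int.castRingHom ℂ)).comp (C I * X) =
        C (-I * I ^ n) * (derivative (conjHermitePoly n)).map (Int.castRingHom ℂ) := by
      have h := congrArg derivative ih
      rw [derivative_comp, derivative_C_mul_X, derivative_map, derivative_C_mul,
        derivative_map] at h
      calc _ = C (-I) * (C I * ((derivative (physHermitePoly n)).map (Int.castRingHom ℂ)).comp
              (C I * X)) := by rw [← mul_assoc, ← C_mul, neg_mul, I_mul_I, neg_neg, C_1, one_mul]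
        _ = _ := by rw [h, ← mul_assoc, ← C_mul]
    rw [physHermitePoly, conjHermitePoly]
    simp only [Polynomial.map_sub, Polynomial.map_add, Polynomial.map_mul, Polynomial.map_ofNat,
      Polynomial.map_X, sub_comp, mul_comp, X_comp, ofNat_comp, ih, hder]
    simp only [map_mul, map_pow, map_neg]
    ring

theorem hasDerivAt_aeval_physHermitePoly_mul_exp_neg_sq (n : ℕ) (x : ℝ) :
    HasDerivAt (fun y : ℝ => aeval y (physHermitePoly n) * Real.exp (-y ^ 2))
      (-(aeval x (physHermitePoly (n + 1)) * Real.exp (-x ^ 2))) x := by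
  have hexp : HasDerivAt (fun y : ℝ => Real.exp (-y ^ 2)) (Real.exp (-x ^ 2) * -(2 * x)) x := by
    simpa using (hasDerivAt_pow 2 x).fun_neg.exp
  refine (((physHermitePoly n).hasDerivAt_aeval x).fun_mul hexp).congr_deriv ?_
  rw [physHermitePoly]
  simp only [map_sub, map_mul, aeval_X, map_ofNat]
  ring

theorem hasDerivAt_aeval_physHermitePoly_mul_cexp_neg_sq (n : ℕ) (z : ℂ) :
    HasDerivAt (fun w : ℂ => aeval w (physHermitePoly n) * Complex.exp (-w ^ 2))
      (-(aeval z (physHermitePoly (n + 1)) * Complex.exp (-z ^ 2))) z := by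
  have hexp :
      HasDerivAt (fun w : ℂ => Complex.exp (-w ^ 2)) (Complex.exp (-z ^ 2) * -(2 * z)) z := by
    simpa using (hasDerivAt_pow 2 z).fun_neg.cexp
  refine (((physHermitePoly n).hasDerivAt_aeval z).fun_mul hexp).congr_deriv ?_
  rw [physHermitePoly]
  simp only [map_sub, map_mul, aeval_X, map_ofNat]
  ring

theorem iteratedDeriv_exp_neg_sq (n : ℕ) :
    iteratedDeriv n (fun y : ℝ => Real.exp (-y ^ 2)) =
      fun x => (-1) ^ n * (aeval x (physHermitePoly n) * Real.exp (-x ^ 2)) := by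
  induction n with
  | zero => ext; simp [physHermitePoly]
  | succ n ih =>
    ext x
    rw [iteratedDeriv_succ, ih,
      ((hasDerivAt_aeval_physHermitePoly_mul_exp_neg_sq n x).const_mul _).deriv]
    ring

theorem iteratedDeriv_cexp_neg_sq (n : ℕ) :
    iteratedDeriv n (fun w : ℂ => Complex.exp (-w ^ 2)) =
      fun z => (-1) ^ n * (aeval z (physHermitePoly n) * Complex.exp (-z ^ 2)) := by
  induction n with
  | zero => ext; simp [physHermitePoly]
  | succ n ih =>
    ext z
    rw [iteratedDeriv_succ, ih,
      ((hasDerivAt_aeval_physHermitePoly_mul_cexp_neg_sq n z).const_mul _).deriv]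
    ring

theorem physHermite_eq_aeval (n : ℕ) (x : ℝ) : physHermite n x = aeval x (physHermitePoly n) := by
  rw [physHermite, iteratedDeriv_exp_neg_sq]
  calc _ = ((-1) * (-1)) ^ n * (Real.exp (x ^ 2) * Real.exp (-x ^ 2)) *
        aeval x (physHermitePoly n) := by rw [mul_pow]; ring
    _ = _ := by rw [← Real.exp_add, add_neg_cancel, Real.exp_zero]; norm_num

theorem hermiteC_eq_aeval (n : ℕ) (z : ℂ) : hermiteC n z = aeval z (physHermitePoly n) := by
  rw [hermiteC, iteratedDeriv_cexp_neg_sq]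
  calc _ = ((-1) * (-1)) ^ n * (Complex.exp (z ^ 2) * Complex.exp (-z ^ 2)) *
        aeval z (physHermitePoly n) := by rw [mul_pow]; ring
    _ = _ := by rw [← Complex.exp_add, add_neg_cancel, Complex.exp_zero]; norm_num

open Complex in
theorem conjHermite_eq_aeval (n : ℕ) (x : ℝ) :
    conjHermite n x = aeval x (conjHermitePoly n) := by
  have h : aeval (I * x) (physHermitePoly n) = I ^ n * aeval (x : ℂ) (conjHermitePoly n) := by
    have := congrArg (eval (x : ℂ)) (map_physHermitePoly_comp_I_mul n)
    simpa [eval_map, aeval_def] using this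
  rw [conjHermite, hermiteC_eq_aeval, h, zpow_neg, zpow_natCast, ← mul_assoc,
    inv_mul_cancel₀ (pow_ne_zero _ I_ne_zero), one_mul,
    ← Complex.coe_algebraMap, aeval_algebraMap_apply, Complex.coe_algebraMap, ofReal_re]

theorem physHermite_zero : physHermite 0 = 1 := by
  ext x
  simp [physHermite_eq_aeval, physHermitePoly]

theorem deriv_physHermite (n : ℕ) :
    deriv (physHermite n) = (2 * n : ℝ) • physHermite (n - 1) := by
  ext x
  simp only [funext (physHermite_eq_aeval _), Polynomial.deriv_aeval, derivative_physHermitePoly,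
    map_mul, map_ofNat, map_natCast, Pi.smul_apply, smul_eq_mul]

theorem deriv_exp_sq_mul_conjHermite (n : ℕ) :
    deriv (fun y => Real.exp (y ^ 2) * conjHermite n y) =
      fun y => Real.exp (y ^ 2) * conjHermite (n + 1) y := by
  ext x
  simp only [conjHermite_eq_aeval]
  refine (((hasDerivAt_pow 2 x).exp).mul ((conjHermitePoly n).hasDerivAt_aeval x)).deriv.trans ?_
  simp only [conjHermitePoly, map_add, map_mul, aeval_X, map_ofNat]
  ring

end Hermite

theorem pW_eq_exp_mul_wronskian (p q : ℕ) (s : Fin p → ℕ) (t : Fin q → ℕ) (x : ℝ) :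
    pW p q s t x = Real.exp (-(p : ℝ) * x ^ 2) *
      wronskian (Fin.append (fun i y => Real.exp (y ^ 2) * conjHermite (s i) y)
        (fun j => physHermite (t j.rev))) x := by
  rw [pW, wronskian]
  congr 3 with i k
  refine Fin.addCases (fun a => ?_) (fun b => ?_) i
  · simp [Fin.append_left]
  · have hb : (⟨p + q - 1 - (p + b), by omega⟩ : Fin q) = b.rev := by
      ext
      simp only [Fin.val_rev]
      omega
    simp [Fin.append_right, hb]

theorem pW_succ_of_last_eq_zero {p q : ℕ} (s : Fin p → ℕ) (t : Fin (q + 1) → ℕ)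
    (ht : t (Fin.last q) = 0) (x : ℝ) :
    pW p (q + 1) s t x = (-1) ^ p * 2 ^ q * (∏ b : Fin q, (t b.castSucc : ℝ)) *
      pW p q (fun i => s i + 1) (fun b => t b.castSucc - 1) x := by
  rw [pW_eq_exp_mul_wronskian, pW_eq_exp_mul_wronskian,
    wronskian_eq_of_apply_eq_one (N := p + q) _
      (Fin.append (fun i y => Real.exp (y ^ 2) * conjHermite (s i + 1) y)
        fun j => physHermite (t j.rev.castSucc - 1))
      (Fin.append (fun _ => 1) fun j => 2 * (t j.rev.castSucc : ℝ))
      (Fin.natAdd p (0 : Fin (q + 1)))]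
  · have hprod :
        ∏ i, Fin.append (fun _ : Fin p => (1 : ℝ)) (fun j => 2 * (t j.rev.castSucc : ℝ)) i =
          2 ^ q * ∏ b : Fin q, (t b.castSucc : ℝ) := by
      rw [Fin.prod_univ_add]
      simp only [Fin.append_left, Fin.append_right, Finset.prod_const_one, one_mul,
        Finset.prod_mul_distrib, Finset.prod_const, Finset.card_univ, Fintype.card_fin]
      congr 1
      exact Fintype.prod_equiv Fin.revPerm _ _ fun _ => rfl
    rw [hprod, Fin.val_natAdd, Fin.val_zero, add_zero]
    ring
  · rw [Fin.append_right, Fin.rev_zero, ht, physHermite_zero]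
  · intro i
    refine Fin.addCases (fun a => ?_) (fun b => ?_) i
    · have ha : (Fin.natAdd p (0 : Fin (q + 1))).succAbove (Fin.castAdd q a) =
          Fin.castAdd (q + 1) a :=
        Fin.succAbove_of_castSucc_lt _ _ (by simp [Fin.lt_def])
      rw [ha, Fin.append_left, Fin.append_left, Fin.append_left, one_smul,
        deriv_exp_sq_mul_conjHermite]
    · have hb : (Fin.natAdd p (0 : Fin (q + 1))).succAbove (Fin.natAdd p b) =
          Fin.natAdd p b.succ :=
        (Fin.succAbove_of_le_castSucc _ _ (by simp [Fin.le_def])).trans (by ext; simp [add_assoc])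
      rw [hb, Fin.append_right, Fin.append_right, Fin.append_right, Fin.rev_succ,
        deriv_physHermite]

section Frobenius

variable {M : Set ℤ} {p q p' q' : ℕ} {s : Fin p → ℕ} {t : Fin q → ℕ}

theorem IsFrobenius.lengths_eq {s' : Fin p' → ℕ} {t' : Fin q' → ℕ} (h : IsFrobenius M s t)
    (h' : IsFrobenius M s' t') : p = p' ∧ q = q' := by
  obtain ⟨hs, ht, hsM, htM⟩ := h
  obtain ⟨hs', ht', hsM', htM'⟩ := h'
  have hp := Set.ncard_range_of_injective hs.injective
  have hq := Set.ncard_range_of_injective ht.injective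
  rw [hsM, ← hsM', Set.ncard_range_of_injective hs'.injective] at hp
  rw [htM, ← htM', Set.ncard_range_of_injective ht'.injective] at hq
  exact ⟨by simpa using hp.symm, by simpa using hq.symm⟩

theorem IsFrobenius.unique {s' : Fin p → ℕ} {t' : Fin q → ℕ} (h : IsFrobenius M s t)
    (h' : IsFrobenius M s' t') : s = s' ∧ t = t' :=
  ⟨(h.1.range_inj h'.1).1 (h.2.2.1.trans h'.2.2.1.symm),
    (h.2.1.range_inj h'.2.1).1 (h.2.2.2.trans h'.2.2.2.symm)⟩

theorem IsFrobenius.last_eq_zero {t : Fin (q + 1) → ℕ} (h : IsFrobenius M s t)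
    (h0 : (0 : ℤ) ∈ M) : t (Fin.last q) = 0 := by
  obtain ⟨j, hj⟩ : 0 ∈ Set.range t := h.2.2.2 ▸ h0
  exact Nat.eq_zero_of_le_zero (hj ▸ h.2.1.antitone (Fin.le_last j))

theorem IsFrobenius.shiftM_one {t : Fin (q + 1) → ℕ} (h : IsFrobenius M s t)
    (h0 : (0 : ℤ) ∈ M) :
    IsFrobenius (shiftM M 1) (fun i => s i + 1) (fun b => t b.castSucc - 1) := by
  have hlast := h.last_eq_zero h0
  obtain ⟨hs, ht, hsM, htM⟩ := h
  have hpos : ∀ b : Fin q, 0 < t b.castSucc := fun b => hlast ▸ ht (Fin.castSucc_lt_last b)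
  refine ⟨fun i j hij => Nat.add_lt_add_right (hs hij) 1, fun i j hij => ?_, ?_, ?_⟩
  · have := ht (Fin.castSucc_lt_castSucc_iff.2 hij)
    have := hpos j
    simp only
    omega
  · ext (_ | c)
    · simpa [MayaMinus, shiftM] using h0
    · have hc : -((c + 1 : ℕ) : ℤ) - 1 + 1 = -(c : ℤ) - 1 := by push_cast; ring
      simp only [Set.mem_range, Nat.add_right_cancel_iff, MayaMinus, shiftM, Set.mem_ofPred_eq,
        hc]
      exact Set.ext_iff.1 hsM c
  · ext a
    change _ ↔ a + 1 ∈ MayaPlus M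
    rw [← htM]
    constructor
    · rintro ⟨b, rfl⟩
      exact ⟨b.castSucc, by have := hpos b; simp only; omega⟩
    · rintro ⟨j, hj⟩
      induction j using Fin.lastCases with
      | last => omega
      | cast b => exact ⟨b, by simp only [hj]; omega⟩

end Frobenius

theorem pseudoWronskian_shift_down_general (M : Set ℤ) (h0 : (0 : ℤ) ∈ M)
    {p q p' q' : ℕ} (s : Fin p → ℕ) (t : Fin q → ℕ)
    (s' : Fin p' → ℕ) (t' : Fin q' → ℕ)
    (hf : IsFrobenius M s t) (hf' : IsFrobenius (shiftM M 1) s' t') :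
    ∀ x : ℝ,
      pW p q s t x =
        (-1 : ℝ) ^ p * 2 ^ (q - 1) *
          (∏ b : Fin (q - 1), (t (Fin.castLE (Nat.sub_le q 1) b) : ℝ)) *
          pW p' q' s' t' x := by
  obtain ⟨j, -⟩ : 0 ∈ Set.range t := hf.2.2.2 ▸ h0
  obtain _ | q := q
  · exact j.elim0
  have hshift := hf.shiftM_one h0
  obtain ⟨rfl, rfl⟩ := hshift.lengths_eq hf'
  obtain ⟨rfl, rfl⟩ := hshift.unique hf'
  exact pW_succ_of_last_eq_zero s t (hf.last_eq_zero h0)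

/-- Lemma `shift1`. If `0 ∈ M` and `M' = M - 1`, then
`H_M = (−1)^p 2^{q−1} (∏_{b=1}^{q−1} t_b) H_{M'}`. -/
theorem pseudoWronskian_shift_down (M : Set ℤ) (hM : IsMaya M) (h0 : (0 : ℤ) ∈ M)
    {p q p' q' : ℕ} (s : Fin p → ℕ) (t : Fin q → ℕ)
    (s' : Fin p' → ℕ) (t' : Fin q' → ℕ)
    (hf : IsFrobenius M s t) (hf' : IsFrobenius (shiftM M 1) s' t') :
    ∀ x : ℝ,
      pW p q s t x =
        (-1 : ℝ) ^ p * 2 ^ (q - 1) *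
          (∏ b : Fin (q - 1), (t (Fin.castLE (Nat.sub_le q 1) b) : ℝ)) *
          pW p' q' s' t' x :=
  pseudoWronskian_shift_down_general M h0 s t s' t' hf hf'
end

section
/- Let M ⊆ ℤ be a Maya diagram with bent diagram {(i_n, j_n)}_{n∈ℤ}, with associated partition λ = (λ₁, …, λ_ℓ) of length ℓ, and let F be the Ferrer's diagram of λ. If n ∈ ℤ is a minimal girth origin for M, then one of the following three possibilities holds: (a) (i_n, j_n) is an inside corner of F; (b) (i_n, j_n) = (0, ℓ); (c) (i_n, j_n) = (λ₁, 0). -/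
/-!
Moving the origin from `k` to `k + 1` changes the girth `i_k + j_k` by `+1` if `k ∉ M` and by
`-1` if `k ∈ M`. So at a minimal girth origin `n` we have `n ∉ M` and `n - 1 ∈ M`, say
`n - 1 = m_{j+1}`; then `(i_n, j_n) = (λ_{j+1}, j)`. If `j = 0` this is `(λ₁, 0)`. Otherwise the
hole `n ∉ M` lies between `m_{j+1}` and `m_j`, so `λ_{j+1} < λ_j`, and `(λ_{j+1}, j)` is an inside
corner unless `λ_{j+1} = 0`, in which case `j = ℓ`.
-/

namespace IsMaya

variable {M : Set ℤ}

lemma finite_notMem_lt (hM : IsMaya M) (k : ℤ) : {x : ℤ | x ∉ M ∧ x < k}.Finite := by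
  refine (hM.2.union (Set.finite_Ico 0 k)).subset fun x ⟨hx, hxk⟩ => ?_
  by_cases h : x < 0
  · exact Or.inl ⟨h, hx⟩
  · exact Or.inr ⟨not_lt.mp h, hxk⟩

lemma finite_mem_ge (hM : IsMaya M) (k : ℤ) : {x : ℤ | x ∈ M ∧ k ≤ x}.Finite := by
  refine (hM.1.union (Set.finite_Ico k 0)).subset fun x ⟨hx, hxk⟩ => ?_
  by_cases h : 0 ≤ x
  · exact Or.inl ⟨hx, h⟩
  · exact Or.inr ⟨hxk, not_le.mp h⟩

end IsMaya

section BentDiagram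

variable {M : Set ℤ}

lemma girth_shiftM (k : ℤ) : girth (shiftM M k) = iN M k + jN M k := by
  have hMinus : (fun a : ℕ => k - 1 - (a : ℤ)) '' MayaMinus (shiftM M k)
      = {x : ℤ | x ∉ M ∧ x < k} := by
    ext x
    simp only [Set.mem_image, MayaMinus, shiftM, Set.mem_ofPred_eq]
    constructor
    · rintro ⟨a, ha, rfl⟩
      exact ⟨by convert ha using 2; ring, by omega⟩
    · rintro ⟨hx, hxk⟩
      exact ⟨(k - 1 - x).toNat, by convert hx using 2; omega, by omega⟩
  have hPlus : (fun a : ℕ => (a : ℤ) + k) '' MayaPlus (shiftM M k)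
      = {x : ℤ | x ∈ M ∧ k ≤ x} := by
    ext x
    simp only [Set.mem_image, MayaPlus, shiftM, Set.mem_ofPred_eq]
    constructor
    · rintro ⟨a, ha, rfl⟩
      exact ⟨ha, by omega⟩
    · rintro ⟨hx, hxk⟩
      exact ⟨(x - k).toNat, by convert hx using 1; omega, by omega⟩
  unfold girth iN jN
  rw [← hMinus, ← hPlus, Set.ncard_image_of_injective _ fun a b h => by simpa using h,
    Set.ncard_image_of_injective _ fun a b h => by simpa using h]

lemma iN_add_one_of_mem {k : ℤ} (h : k ∈ M) : iN M (k + 1) = iN M k := by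
  unfold iN
  congr 1
  ext x
  simp only [Set.mem_ofPred_eq, Int.lt_add_one_iff, le_iff_lt_or_eq]
  grind

lemma iN_add_one_of_notMem (hM : IsMaya M) {k : ℤ} (h : k ∉ M) : iN M (k + 1) = iN M k + 1 := by
  have : {x : ℤ | x ∉ M ∧ x < k + 1} = insert k {x : ℤ | x ∉ M ∧ x < k} := by
    ext x
    simp only [Set.mem_ofPred_eq, Set.mem_insert_iff, Int.lt_add_one_iff, le_iff_lt_or_eq]
    grind
  rw [iN, this, Set.ncard_insert_of_notMem (by simp) (hM.finite_notMem_lt k), iN]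

lemma jN_eq_add_one_of_mem (hM : IsMaya M) {k : ℤ} (h : k ∈ M) : jN M k = jN M (k + 1) + 1 := by
  have : {x : ℤ | x ∈ M ∧ k ≤ x} = insert k {x : ℤ | x ∈ M ∧ k + 1 ≤ x} := by
    ext x
    simp only [Set.mem_ofPred_eq, Set.mem_insert_iff, le_iff_lt_or_eq]
    grind
  rw [jN, this, Set.ncard_insert_of_notMem (by simp) (hM.finite_mem_ge (k + 1)), jN]

lemma jN_add_one_of_notMem {k : ℤ} (h : k ∉ M) : jN M (k + 1) = jN M k := by
  unfold jN
  congr 1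
  ext x
  simp only [Set.mem_ofPred_eq, le_iff_lt_or_eq]
  grind

lemma iN_mono (hM : IsMaya M) : Monotone (iN M) := fun _ _ hab =>
  Set.ncard_le_ncard (fun _ ⟨hx, hxa⟩ => ⟨hx, hxa.trans_le hab⟩) (hM.finite_notMem_lt _)

lemma iN_lt_of_notMem (hM : IsMaya M) {a b c : ℤ} (hac : a ≤ c) (hcb : c < b) (hc : c ∉ M) :
    iN M a < iN M b :=
  calc iN M a ≤ iN M c := iN_mono hM hac
    _ < iN M (c + 1) := by rw [iN_add_one_of_notMem hM hc]; omega
    _ ≤ iN M b := iN_mono hM (Int.add_one_le_iff.mpr hcb)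

lemma girth_shiftM_add_one_of_mem (hM : IsMaya M) {k : ℤ} (h : k ∈ M) :
    girth (shiftM M (k + 1)) + 1 = girth (shiftM M k) := by
  rw [girth_shiftM, girth_shiftM, iN_add_one_of_mem h, jN_eq_add_one_of_mem hM h]
  ring

lemma girth_shiftM_add_one_of_notMem (hM : IsMaya M) {k : ℤ} (h : k ∉ M) :
    girth (shiftM M (k + 1)) = girth (shiftM M k) + 1 := by
  rw [girth_shiftM, girth_shiftM, iN_add_one_of_notMem hM h, jN_add_one_of_notMem h]
  ring

lemma notMem_and_sub_one_mem_of_minimal (hM : IsMaya M) {n : ℤ}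
    (hn : ∀ j : ℤ, girth (shiftM M n) ≤ girth (shiftM M j)) : n ∉ M ∧ n - 1 ∈ M := by
  constructor
  · intro h
    have hstep := girth_shiftM_add_one_of_mem hM h
    have := hn (n + 1)
    omega
  · by_contra h
    have hstep := girth_shiftM_add_one_of_notMem hM h
    rw [sub_add_cancel] at hstep
    have := hn (n - 1)
    omega

lemma jN_enum_add_one {m : ℕ → ℤ} (hm : StrictAnti m) (hrange : Set.range m = M) (j : ℕ) :
    jN M (m j + 1) = j := by
  have : {x : ℤ | x ∈ M ∧ m j + 1 ≤ x} = m '' Set.Iio j := by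
    ext x
    simp only [Set.mem_ofPred_eq, Set.mem_image, Set.mem_Iio, ← hrange, Set.mem_range]
    constructor
    · rintro ⟨⟨i, rfl⟩, hi⟩
      exact ⟨i, hm.lt_iff_gt.mp (by omega), rfl⟩
    · rintro ⟨i, hi, rfl⟩
      exact ⟨⟨i, rfl⟩, hm hi⟩
  rw [jN, this, Set.ncard_image_of_injective _ hm.injective, Set.ncard_Iio_nat]

end BentDiagram

/-- Indices are 0-based: `m i` is `m_{i+1}` and `lam i` is `λ_{i+1}`. -/
theorem minimal_girth_origin_cases (M : Set ℤ) (hM : IsMaya M)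
    (m : ℕ → ℤ) (hm : StrictAnti m) (hrange : Set.range m = M)
    (lam : ℕ → ℕ) (hlam : ∀ i : ℕ, lam i = {x : ℤ | x ∉ M ∧ x < m i}.ncard)
    (ℓ : ℕ) (hlen : ∀ i : ℕ, 0 < lam i ↔ i < ℓ)
    (F : Set (ℕ × ℕ))
    (hF : F = {p : ℕ × ℕ | 1 ≤ p.1 ∧ 1 ≤ p.2 ∧ p.1 ≤ lam (p.2 - 1)})
    (n : ℤ) (hn : ∀ j : ℤ, girth (shiftM M n) ≤ girth (shiftM M j)) :
    ((iN M n, jN M n) ∈ F ∧ (iN M n + 1, jN M n) ∈ F ∧ (iN M n, jN M n + 1) ∈ F ∧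
        (iN M n + 1, jN M n + 1) ∉ F) ∨
      (iN M n = 0 ∧ jN M n = ℓ) ∨
      (iN M n = lam 0 ∧ jN M n = 0) := by
  obtain ⟨hnM, hpred⟩ := notMem_and_sub_one_mem_of_minimal hM hn
  obtain ⟨j, hj⟩ : n - 1 ∈ Set.range m := hrange ▸ hpred
  have hn_eq : n = m j + 1 := by omega
  have hjN : jN M n = j := hn_eq ▸ jN_enum_add_one hm hrange j
  have hiN : iN M n = lam j := by rw [hlam, hn_eq, iN_add_one_of_mem (hj ▸ hpred), iN]
  rw [hiN, hjN]
  obtain _ | k := j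
  · exact Or.inr (Or.inr ⟨rfl, rfl⟩)
  have hmk : m k ∈ M := hrange ▸ Set.mem_range_self k
  have hlt : n < m k :=
    lt_of_le_of_ne (by have := hm (Nat.lt_add_one k); omega) fun h => hnM (h ▸ hmk)
  have hstep : lam (k + 1) < lam k := by
    rw [← hiN, hlam k]
    exact iN_lt_of_notMem hM le_rfl hlt hnM
  by_cases hzero : lam (k + 1) = 0
  · have hk : k < ℓ := (hlen k).mp (by omega)
    have hk' : ¬k + 1 < ℓ := by rw [← hlen]; omega
    exact Or.inr (Or.inl ⟨hzero, by omega⟩)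
  · left
    subst hF
    simp only [Set.mem_ofPred_eq, Nat.add_sub_cancel]
    omega
end

section
/- Let M be a Maya diagram in standard form with associated partition λ of length ℓ and size |λ|, let r be the minimal girth of M, and let k_s := max{n ∈ ℤ : n−1 ∈ M, n ∉ M, i_n + j_n = s} (with k_s := −∞ when this set is empty). For n ∉ M + |λ| − ℓ set M^{(λ)}_n := M ∪ {n + ℓ − |λ|} and r^{(λ)}_n := min{|M^{(λ)}_n − k| : k ∈ ℤ}. If k_{r+1} > k_r, then r^{(λ)}_n = r − 1 when n < k_r + |λ| − ℓ; r^{(λ)}_n = r when k_r + |λ| − ℓ ≤ n < k_{r+1} + |λ| − ℓ; and r^{(λ)}_n = r + 1 when n > k_{r+1} + |λ| − ℓ. If k_{r+1} < k_r, then r^{(λ)}_n = r − 1 when n < k_r + |λ| − ℓ; r^{(λ)}_n = r when n = k_r + |λ| − ℓ; and r^{(λ)}_n = r + 1 when n > k_r + |λ| − ℓ. -/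
/-- `O_s = {n : n−1 ∈ M, n ∉ M, i_n + j_n = s}`, the set of shifts `n` with
`girth (M − n) = s` occurring at a filled-box/empty-box transition. -/
def Oset (M : Set ℤ) (s : ℕ) : Set ℤ :=
  {n : ℤ | (n - 1) ∈ M ∧ n ∉ M ∧ iN M n + jN M n = s}


lemma my_minus (M : Set ℤ) (k : ℤ) : (MayaMinus (shiftM M k)).ncard = iN M k := by
  have himg : (fun a : ℕ => k - 1 - (a:ℤ)) '' MayaMinus (shiftM M k)
      = {m : ℤ | m ∉ M ∧ m < k} := by
    ext y
    simp only [MayaMinus, shiftM, Set.mem_image, Set.mem_setOf_eq]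
    constructor
    · rintro ⟨a, ha, rfl⟩
      refine ⟨?_, by omega⟩
      rwa [show k - 1 - (a:ℤ) = -(a:ℤ) - 1 + k by ring]
    · rintro ⟨h1, h2⟩
      refine ⟨(k - 1 - y).toNat, ?_, by omega⟩
      rwa [show -(((k - 1 - y).toNat : ℤ)) - 1 + k = y by omega]
  rw [iN, ← himg, Set.ncard_image_of_injective _ (by intro a b hab; simp only at hab; omega)]

lemma my_plus (M : Set ℤ) (k : ℤ) : (MayaPlus (shiftM M k)).ncard = jN M k := by
  have himg : (fun a : ℕ => (a:ℤ) + k) '' MayaPlus (shiftM M k) = {m : ℤ | m ∈ M ∧ k ≤ m} := by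
    ext y
    simp only [MayaPlus, shiftM, Set.mem_image, Set.mem_setOf_eq]
    constructor
    · rintro ⟨a, ha, rfl⟩; exact ⟨ha, by omega⟩
    · rintro ⟨h1, h2⟩
      refine ⟨(y - k).toNat, ?_, by omega⟩
      rwa [show (((y - k).toNat : ℤ)) + k = y by omega]
  rw [jN, ← himg, Set.ncard_image_of_injective _ (by intro a b hab; simp only at hab; omega)]

lemma my_girth_shift (M : Set ℤ) (k : ℤ) : girth (shiftM M k) = iN M k + jN M k := by
  rw [girth, my_minus, my_plus]

lemma my_finI {M : Set ℤ} (hM : IsMaya M) (n : ℤ) : {m : ℤ | m ∉ M ∧ m < n}.Finite := by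
  apply Set.Finite.subset (hM.2.union (Set.finite_Ico 0 n))
  rintro y ⟨h1, h2⟩
  by_cases hy : y < 0
  · exact Or.inl ⟨hy, h1⟩
  · exact Or.inr ⟨by omega, h2⟩

lemma my_finJ {M : Set ℤ} (hM : IsMaya M) (n : ℤ) : {m : ℤ | m ∈ M ∧ n ≤ m}.Finite := by
  apply Set.Finite.subset (hM.1.union (Set.finite_Ico n 0))
  rintro y ⟨h1, h2⟩
  by_cases hy : 0 ≤ y
  · exact Or.inl ⟨h1, hy⟩
  · exact Or.inr ⟨h2, by omega⟩

lemma my_step_i {M : Set ℤ} (hM : IsMaya M) (k : ℤ) (hk : k ∉ M) :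
    iN M (k+1) = iN M k + 1 := by
  have hset : {m : ℤ | m ∉ M ∧ m < k+1} = insert k {m : ℤ | m ∉ M ∧ m < k} := by
    ext y
    simp only [Set.mem_setOf_eq, Set.mem_insert_iff]
    constructor
    · rintro ⟨h1, h2⟩
      by_cases hy : y = k
      · exact Or.inl hy
      · exact Or.inr ⟨h1, by omega⟩
    · rintro (rfl | ⟨h1, h2⟩)
      · exact ⟨hk, by omega⟩
      · exact ⟨h1, by omega⟩
  rw [iN, iN, hset, Set.ncard_insert_of_notMem (fun h => lt_irrefl k h.2) (my_finI hM k)]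

lemma my_step_i' {M : Set ℤ} (k : ℤ) (hk : k ∈ M) : iN M (k+1) = iN M k := by
  rw [iN, iN]
  congr 1
  ext y
  simp only [Set.mem_setOf_eq]
  constructor
  · rintro ⟨h1, h2⟩
    refine ⟨h1, ?_⟩
    rcases eq_or_ne y k with rfl | hne
    · exact absurd hk h1
    · omega
  · rintro ⟨h1, h2⟩; exact ⟨h1, by omega⟩

lemma my_step_j {M : Set ℤ} (hM : IsMaya M) (k : ℤ) (hk : k ∈ M) :
    jN M k = jN M (k+1) + 1 := by
  have hset : {m : ℤ | m ∈ M ∧ k ≤ m} = insert k {m : ℤ | m ∈ M ∧ k+1 ≤ m} := by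
    ext y
    simp only [Set.mem_setOf_eq, Set.mem_insert_iff]
    constructor
    · rintro ⟨h1, h2⟩
      by_cases hy : y = k
      · exact Or.inl hy
      · exact Or.inr ⟨h1, by omega⟩
    · rintro (rfl | ⟨h1, h2⟩)
      · exact ⟨hk, le_refl _⟩
      · exact ⟨h1, by omega⟩
  rw [jN, jN, hset, Set.ncard_insert_of_notMem (fun h => absurd h.2 (by omega)) (my_finJ hM (k+1))]

lemma my_step_j' {M : Set ℤ} (k : ℤ) (hk : k ∉ M) : jN M k = jN M (k+1) := by
  rw [jN, jN]
  congr 1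
  ext y
  simp only [Set.mem_setOf_eq]
  constructor
  · rintro ⟨h1, h2⟩
    refine ⟨h1, ?_⟩
    rcases eq_or_ne y k with rfl | hne
    · exact absurd h1 hk
    · omega
  · rintro ⟨h1, h2⟩; exact ⟨h1, by omega⟩

lemma my_maya_union {M : Set ℤ} (hM : IsMaya M) (x : ℤ) : IsMaya (M ∪ {x}) := by
  constructor
  · apply Set.Finite.subset (hM.1.union (Set.finite_singleton x))
    rintro y ⟨(h | h), h2⟩
    · exact Or.inl ⟨h, h2⟩
    · exact Or.inr h
  · apply Set.Finite.subset hM.2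
    rintro y ⟨h1, h2⟩
    exact ⟨h1, fun h => h2 (Or.inl h)⟩

lemma my_new_i_le (M : Set ℤ) (x k : ℤ) (h : k ≤ x) : iN (M ∪ {x}) k = iN M k := by
  rw [iN, iN]
  congr 1
  ext y
  simp only [Set.mem_setOf_eq, Set.mem_union, Set.mem_singleton_iff]
  constructor
  · rintro ⟨h1, h2⟩; exact ⟨fun hc => h1 (Or.inl hc), h2⟩
  · rintro ⟨h1, h2⟩
    refine ⟨?_, h2⟩
    rintro (hc | rfl)
    · exact h1 hc
    · omega

lemma my_new_i_gt {M : Set ℤ} (hM : IsMaya M) (x k : ℤ) (hx : x ∉ M) (h : x < k) :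
    iN M k = iN (M ∪ {x}) k + 1 := by
  have hset : {m : ℤ | m ∉ M ∧ m < k} = insert x {m : ℤ | m ∉ M ∪ {x} ∧ m < k} := by
    ext y
    simp only [Set.mem_setOf_eq, Set.mem_insert_iff, Set.mem_union, Set.mem_singleton_iff]
    constructor
    · rintro ⟨h1, h2⟩
      by_cases hy : y = x
      · exact Or.inl hy
      · exact Or.inr ⟨by tauto, h2⟩
    · rintro (rfl | ⟨h1, h2⟩)
      · exact ⟨hx, h⟩
      · exact ⟨fun hc => h1 (Or.inl hc), h2⟩
  have hfin : {m : ℤ | m ∉ M ∪ {x} ∧ m < k}.Finite := my_finI (my_maya_union hM x) k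
  rw [iN, iN, hset, Set.ncard_insert_of_notMem (fun hc => hc.1 (Or.inr rfl)) hfin]

lemma my_new_j_le {M : Set ℤ} (hM : IsMaya M) (x k : ℤ) (hx : x ∉ M) (h : k ≤ x) :
    jN (M ∪ {x}) k = jN M k + 1 := by
  have hset : {m : ℤ | m ∈ M ∪ {x} ∧ k ≤ m} = insert x {m : ℤ | m ∈ M ∧ k ≤ m} := by
    ext y
    simp only [Set.mem_setOf_eq, Set.mem_insert_iff, Set.mem_union, Set.mem_singleton_iff]
    constructor
    · rintro ⟨(h1 | rfl), h2⟩
      · exact Or.inr ⟨h1, h2⟩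
      · exact Or.inl rfl
    · rintro (rfl | ⟨h1, h2⟩)
      · exact ⟨Or.inr rfl, h⟩
      · exact ⟨Or.inl h1, h2⟩
  rw [jN, jN, hset, Set.ncard_insert_of_notMem (fun hc => hx hc.1) (my_finJ hM k)]

lemma my_new_j_gt (M : Set ℤ) (x k : ℤ) (h : x < k) : jN (M ∪ {x}) k = jN M k := by
  rw [jN, jN]
  congr 1
  ext y
  simp only [Set.mem_setOf_eq, Set.mem_union, Set.mem_singleton_iff]
  constructor
  · rintro ⟨(h1 | rfl), h2⟩
    · exact ⟨h1, h2⟩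
    · omega
  · rintro ⟨h1, h2⟩; exact ⟨Or.inl h1, h2⟩

/-- Corollary `shortest`. Minimal order `r^{(λ)}_n` of the exceptional
Hermite pseudo-Wronskian `H_{M ∪ {n + ℓ − |λ|}}`.  Here `M` is standard with partition
`lam` (0-based) of length `ℓ` and size `size = |λ|`; `r` is the minimal girth of `M`;
`kr = k_r` is the largest minimal girth origin (`O_r ≠ ∅` since `r` is the minimal girth);
and `k1 = k_{r+1}` is taken in `WithBot ℤ` (so that `k1 = ⊥` when `O_{r+1} = ∅`),
characterized as the least upper bound of `O_{r+1}` in `WithBot ℤ`. -/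
theorem exceptional_hermite_minimal_order (M : Set ℤ) (hM : IsMaya M)
    (hstd : IsStandard M)
    (m : ℕ → ℤ) (hm : StrictAnti m) (hrange : Set.range m = M)
    (lam : ℕ → ℕ) (hlam : ∀ i : ℕ, lam i = {x : ℤ | x ∉ M ∧ x < m i}.ncard)
    (ℓ : ℕ) (hlen : ∀ i : ℕ, 0 < lam i ↔ i < ℓ)
    (size : ℕ) (hsize : size = ∑ i ∈ Finset.range ℓ, lam i)
    (r : ℕ) (hr : IsLeast {g : ℕ | ∃ k : ℤ, g = girth (shiftM M k)} r)
    (kr : ℤ) (hkr : IsGreatest (Oset M r) kr)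
    (k1 : WithBot ℤ)
    (hk1 : IsLUB ((fun n : ℤ => (n : WithBot ℤ)) '' Oset M (r + 1)) k1)
    (n : ℤ) (hn : (n + (ℓ : ℤ) - (size : ℤ)) ∉ M)
    (rn : ℕ)
    (hrn : IsLeast
      {g : ℕ | ∃ k : ℤ, g = girth (shiftM (M ∪ {n + (ℓ : ℤ) - (size : ℤ)}) k)} rn) :
    -- case k_{r+1} > k_r
    ((kr : WithBot ℤ) < k1 →
      ((n < kr + (size : ℤ) - (ℓ : ℤ) → (rn : ℤ) = (r : ℤ) - 1) ∧
       ((kr + (size : ℤ) - (ℓ : ℤ) ≤ n ∧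
          (n : WithBot ℤ) < k1 + (((size : ℤ) - (ℓ : ℤ) : ℤ) : WithBot ℤ)) → rn = r) ∧
       (k1 + (((size : ℤ) - (ℓ : ℤ) : ℤ) : WithBot ℤ) < (n : WithBot ℤ) → rn = r + 1))) ∧
    -- case k_{r+1} < k_r
    (k1 < (kr : WithBot ℤ) →
      ((n < kr + (size : ℤ) - (ℓ : ℤ) → (rn : ℤ) = (r : ℤ) - 1) ∧
       (n = kr + (size : ℤ) - (ℓ : ℤ) → rn = r) ∧
       (n > kr + (size : ℤ) - (ℓ : ℤ) → rn = r + 1))) := by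

  classical
  set x : ℤ := n + (ℓ : ℤ) - (size : ℤ) with hxdef
  -- basic facts about the girth function g k = iN M k + jN M k
  have F3 : ∀ k : ℤ, r ≤ iN M k + jN M k := by
    intro k
    have h := hr.2 ⟨k, rfl⟩
    rwa [my_girth_shift] at h
  obtain ⟨hkrM1, hkrM, hkrg⟩ := hkr.1
  have stepUp : ∀ k : ℤ, k ∉ M → iN M (k+1) + jN M (k+1) = iN M k + jN M k + 1 := by
    intro k hk
    have h1 := my_step_i hM k hk
    have h2 := my_step_j' k hk
    omega
  have stepDown : ∀ k : ℤ, k ∈ M → iN M k + jN M k = iN M (k+1) + jN M (k+1) + 1 := by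
    intro k hk
    have h1 := my_step_i' k hk
    have h2 := my_step_j hM k hk
    omega
  have FA : ∀ k : ℤ, iN M k + jN M k = r → k ∈ Oset M r := by
    intro k hk
    have hkm1 : k - 1 ∈ M := by
      by_contra hc
      have h1 := stepUp (k-1) hc
      rw [show k - 1 + 1 = k by ring] at h1
      have h2 := F3 (k-1)
      omega
    have hknm : k ∉ M := by
      by_contra hc
      have h1 := stepDown k hc
      have h2 := F3 (k+1)
      omega
    exact ⟨hkm1, hknm, hk⟩
  have F7 : ∀ k : ℤ, iN M k + jN M k = r → k ≤ kr := fun k hk => hkr.2 (FA k hk)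
  have GgtKr : ∀ k : ℤ, kr < k → r + 1 ≤ iN M k + jN M k := by
    intro k hk
    have h1 := F3 k
    by_contra hc
    have : iN M k + jN M k = r := by omega
    have := F7 k this
    omega
  have F8 : iN M (kr+1) + jN M (kr+1) = r + 1 := by
    have := stepUp kr hkrM
    omega
  have F9 : ∀ k : ℤ, iN M k + jN M k = r + 1 → k ∈ Oset M (r+1) ∨ k ≤ kr + 1 := by
    intro k hk
    by_cases h1 : k - 1 ∈ M
    · by_cases h2 : k ∈ M
      · right
        have hs := stepDown k h2
        have : iN M (k+1) + jN M (k+1) = r := by omega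
        have := F7 _ this
        omega
      · exact Or.inl ⟨h1, h2, hk⟩
    · right
      have hs := stepUp (k-1) h1
      rw [show k - 1 + 1 = k by ring] at hs
      have h3 := F3 (k-1)
      have : iN M (k-1) + jN M (k-1) = r := by omega
      have := F7 _ this
      omega
  -- facts about the augmented diagram
  have G1 : ∀ k : ℤ, k ≤ x → iN (M ∪ {x}) k + jN (M ∪ {x}) k = iN M k + jN M k + 1 := by
    intro k hk
    have h1 := my_new_i_le M x k hk
    have h2 := my_new_j_le hM x k hn hk
    omega
  have G2 : ∀ k : ℤ, x < k → iN (M ∪ {x}) k + jN (M ∪ {x}) k + 1 = iN M k + jN M k := by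
    intro k hk
    have h1 := my_new_i_gt hM x k hn hk
    have h2 := my_new_j_gt M x k hk
    omega
  have key : ∀ v : ℕ, (∃ k : ℤ, iN (M ∪ {x}) k + jN (M ∪ {x}) k = v) →
      (∀ k : ℤ, v ≤ iN (M ∪ {x}) k + jN (M ∪ {x}) k) → rn = v := by
    rintro v ⟨k, hk⟩ hlb
    refine hrn.unique ⟨⟨k, ?_⟩, ?_⟩
    · rw [my_girth_shift]
      exact hk.symm
    · rintro s ⟨k2, rfl⟩
      rw [my_girth_shift]
      exact hlb k2
  have LB1 : ∀ k : ℤ, k ≤ x → r + 1 ≤ iN (M ∪ {x}) k + jN (M ∪ {x}) k := by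
    intro k hk
    have := G1 k hk
    have := F3 k
    omega
  -- common low case
  have caseLow : n < kr + (size : ℤ) - (ℓ : ℤ) → (rn : ℤ) = (r : ℤ) - 1 := by
    intro hnlt
    have hxkr : x < kr := by omega
    have hr1 : 1 ≤ r := by
      have hpos : 0 < iN M kr := by
        rw [iN, Set.ncard_pos (my_finI hM kr)]
        exact ⟨x, hn, hxkr⟩
      omega
    have hmem := G2 kr hxkr
    have hval : rn = r - 1 := by
      apply key (r - 1) ⟨kr, by omega⟩
      intro k
      by_cases hkx : k ≤ x
      · have := LB1 k hkx
        omega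
      · push_neg at hkx
        have h1 := G2 k hkx
        have h2 := F3 k
        omega
    omega
  refine ⟨?_, ?_⟩
  · -- case kr < k1
    intro hlt
    -- extract the greatest element of Oset M (r+1)
    have hne : (Oset M (r+1)).Nonempty := by
      by_contra hc
      rw [Set.not_nonempty_iff_eq_empty] at hc
      rw [hc, Set.image_empty] at hk1
      have hbot : k1 ≤ ⊥ := hk1.2 (by intro y hy; exact absurd hy (Set.notMem_empty y))
      rw [le_bot_iff] at hbot
      rw [hbot] at hlt
      exact absurd hlt (not_lt_bot)
    have hk1nb : k1 ≠ ⊥ := by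
      intro hc
      rw [hc] at hlt
      exact absurd hlt (not_lt_bot)
    obtain ⟨b0, hb0⟩ := WithBot.ne_bot_iff_exists.mp hk1nb
    have hbdd : ∀ a ∈ Oset M (r+1), a ≤ b0 := by
      intro a ha
      have : ((a : ℤ) : WithBot ℤ) ≤ k1 := hk1.1 ⟨a, ha, rfl⟩
      rw [← hb0] at this
      exact_mod_cast this
    obtain ⟨a0, ha0⟩ := hne
    obtain ⟨k1', hk1'mem, hk1'ub⟩ :=
      Int.exists_greatest_of_bdd (P := fun z => z ∈ Oset M (r+1)) ⟨b0, hbdd⟩ ⟨a0, ha0⟩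
    have hk1eq : k1 = (k1' : WithBot ℤ) := by
      apply le_antisymm
      · apply hk1.2
        rintro y ⟨a, ha, rfl⟩
        exact WithBot.coe_le_coe.mpr (hk1'ub a ha)
      · exact hk1.1 ⟨k1', hk1'mem, rfl⟩
    have hkrk1 : kr < k1' := by
      rw [hk1eq] at hlt
      exact_mod_cast hlt
    obtain ⟨hA1, hA2, hA3⟩ := hk1'mem
    refine ⟨caseLow, ?_, ?_⟩
    · rintro ⟨h1, h2⟩
      rw [hk1eq, ← WithBot.coe_add] at h2
      have h2' : n < k1' + ((size : ℤ) - (ℓ : ℤ)) := by exact_mod_cast h2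
      have hxk1 : x < k1' := by omega
      have hkrx : kr ≤ x := by omega
      apply key r
      · exact ⟨k1', by have := G2 k1' hxk1; omega⟩
      · intro k
        by_cases hkx : k ≤ x
        · have := LB1 k hkx
          omega
        · push_neg at hkx
          have h3 := G2 k hkx
          have h4 := GgtKr k (by omega)
          omega
    · intro h2
      rw [hk1eq, ← WithBot.coe_add] at h2
      have h2' : k1' + ((size : ℤ) - (ℓ : ℤ)) < n := by exact_mod_cast h2
      have hxk1 : k1' < x := by omega
      have hkrx : kr ≤ x := by omega
      apply key (r+1)
      · exact ⟨kr, by have := G1 kr hkrx; omega⟩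
      · intro k
        by_cases hkx : k ≤ x
        · exact LB1 k hkx
        · push_neg at hkx
          have h3 := G2 k hkx
          have h4 := GgtKr k (by omega)
          have h5 : iN M k + jN M k ≠ r + 1 := by
            intro hc
            rcases F9 k hc with hmem | hle
            · have := hk1'ub k hmem
              omega
            · omega
          omega
  · -- case k1 < kr
    intro hlt
    have hOsmall : ∀ a ∈ Oset M (r+1), a < kr := by
      intro a ha
      have h1 : ((a : ℤ) : WithBot ℤ) ≤ k1 := hk1.1 ⟨a, ha, rfl⟩
      have h2 : ((a : ℤ) : WithBot ℤ) < (kr : WithBot ℤ) := lt_of_le_of_lt h1 hlt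
      exact_mod_cast h2
    refine ⟨caseLow, ?_, ?_⟩
    · intro heq
      have hxkr : x = kr := by omega
      apply key r
      · refine ⟨kr + 1, ?_⟩
        have := G2 (kr+1) (by omega)
        omega
      · intro k
        by_cases hkx : k ≤ x
        · have := LB1 k hkx
          omega
        · push_neg at hkx
          have h3 := G2 k hkx
          have h4 := GgtKr k (by omega)
          omega
    · intro hgt
      have hxkr : kr < x := by omega
      apply key (r+1)
      · exact ⟨kr, by have := G1 kr (le_of_lt hxkr); omega⟩
      · intro k
        by_cases hkx : k ≤ x
        · exact LB1 k hkx
        · push_neg at hkx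
          have h3 := G2 k hkx
          have h4 := GgtKr k (by omega)
          have h5 : iN M k + jN M k ≠ r + 1 := by
            intro hc
            rcases F9 k hc with hmem | hle
            · have := hOsmall k hmem
              omega
            · omega
          omega
end
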